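/- arXiv:0707.2092 — 9 statements merged into one kernel-verified Lean document; each statement's English description precedes it below -/
import Mathlib

section
/- Let h, k, p, q be real numbers with 0 < p < h and 0 < q < k. Define g(v) = -p²v² + (4kh - 2pq)v - q², let I be the open interval on which g > 0, and define f(v) = g(v)/((kv + h) + √((kv - h)² + (vp + q)²))² for v ∈ I. Then f attains a strict global maximum on I at the unique point v₀ = (q²k + 2kh² - hpq)/(2k²h - kpq + hp²); that is, v₀ ∈ I and f(v) < f(v₀) for every v ∈ I with v ≠ v₀. -/
set_option maxHeartbeats 1000000 in
theorem mecum_key_iden (h k p q v A N T G gv : ℝ)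
    (hgv : gv = -p^2 * v^2 + (4*k*h - 2*p*q) * v - q^2)
    (hA : A = 2*k^2*h - k*p*q + h*p^2)
    (hN : N = q^2*k + 2*k*h^2 - h*p*q)
    (hT : T = k^2*q^2 - 2*h*k*p*q + h^2*p^2 + 4*h^2*k^2)
    (hG : G = 4*h*k*(h*k - p*q)*T) :
    gv * T^2 * A^2 - G * ((k*v + h)*A)^2
      = -((p^2*T^2 + k^2*G) * (v*A - N)^2) := by
  subst hgv hA hN hG hT; ring

set_option maxHeartbeats 1000000 in
theorem minimal_eccentricity_circumscribed_unique_max (h k p q : ℝ)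
    (hp : 0 < p) (hph : p < h) (hq : 0 < q) (hqk : q < k)
    (g f : ℝ → ℝ)
    (hg : ∀ v, g v = -p^2 * v^2 + (4*k*h - 2*p*q) * v - q^2)
    (hf : ∀ v, f v = g v / ((k*v + h) + Real.sqrt ((k*v - h)^2 + (v*p + q)^2))^2)
    (v₀ : ℝ) (hv₀ : v₀ = (q^2*k + 2*k*h^2 - h*p*q) / (2*k^2*h - k*p*q + h*p^2)) :
    g v₀ > 0 ∧ ∀ v : ℝ, g v > 0 → v ≠ v₀ → f v < f v₀ := by
  have hh : 0 < h := hp.trans hph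
  have hk : 0 < k := hq.trans hqk
  have hpq : p * q < h * k := by nlinarith
  obtain ⟨A, hAdef⟩ : ∃ A : ℝ, A = 2*k^2*h - k*p*q + h*p^2 := ⟨_, rfl⟩
  obtain ⟨N, hNdef⟩ : ∃ N : ℝ, N = q^2*k + 2*k*h^2 - h*p*q := ⟨_, rfl⟩
  obtain ⟨T, hTdef⟩ : ∃ T : ℝ, T = k^2*q^2 - 2*h*k*p*q + h^2*p^2 + 4*h^2*k^2 := ⟨_, rfl⟩
  obtain ⟨G, hGdef⟩ : ∃ G : ℝ, G = 4*h*k*(h*k - p*q)*T := ⟨_, rfl⟩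
  have hA : 0 < A := by rw [hAdef]; nlinarith
  have hAne : A ≠ 0 := ne_of_gt hA
  have hN : 0 < N := by rw [hNdef]; nlinarith
  have hTpos : 0 < T := by rw [hTdef]; nlinarith [sq_nonneg (k*q - h*p)]
  have hGpos : 0 < G := by
    rw [hGdef]
    have : 0 < h*k - p*q := by linarith
    positivity
  have hv₀pos : 0 < v₀ := by
    rw [hv₀, ← hAdef, ← hNdef]
    positivity
  have hv₀A : v₀ * A = N := by
    rw [hv₀, ← hAdef, ← hNdef]
    field_simp
  have hS₀A : (k*v₀ + h) * A = T := by
    rw [hAdef, hNdef] at hv₀A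
    rw [hAdef, hTdef]
    linear_combination k * hv₀A
  -- value of g v₀ (scaled)
  have hgv₀A : g v₀ * A^2 = G := by
    have hv₀A' := hv₀A
    rw [hAdef, hNdef] at hv₀A'
    rw [hg, hAdef, hGdef, hTdef]
    linear_combination (-p^2*(v₀*(2*k^2*h - k*p*q + h*p^2))
        + (4*k*h - 2*p*q)*(2*k^2*h - k*p*q + h*p^2)
        - p^2*(q^2*k + 2*k*h^2 - h*p*q)) * hv₀A'
  have hgv₀ : 0 < g v₀ := by
    rcases lt_or_ge 0 (g v₀) with hpos | hle
    · exact hpos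
    · exfalso
      have hA2 : 0 < A^2 := by positivity
      have hmp : g v₀ * A^2 ≤ 0 := mul_nonpos_of_nonpos_of_nonneg hle (sq_nonneg A)
      linarith only [hmp, hgv₀A, hGpos]
  refine ⟨hgv₀, ?_⟩
  intro v hgv hvne
  have hB : 0 < 4*k*h - 2*p*q := by nlinarith
  have hvpos : 0 < v := by
    by_contra hc
    push_neg at hc
    have hgv' := hgv
    rw [hg] at hgv'
    nlinarith [sq_nonneg v, mul_nonpos_of_nonneg_of_nonpos hB.le hc]
  have hSpos : 0 < k*v + h := by positivity
  have hS₀pos : 0 < k*v₀ + h := by positivity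
  obtain ⟨D, hDdef⟩ : ∃ D : ℝ, D = Real.sqrt ((k*v - h)^2 + (v*p + q)^2) := ⟨_, rfl⟩
  obtain ⟨D₀, hD₀def⟩ : ∃ D₀ : ℝ, D₀ = Real.sqrt ((k*v₀ - h)^2 + (v₀*p + q)^2) := ⟨_, rfl⟩
  have hDnn : 0 ≤ D := hDdef ▸ Real.sqrt_nonneg _
  have hD₀nn : 0 ≤ D₀ := hD₀def ▸ Real.sqrt_nonneg _
  have hD2 : D^2 = (k*v + h)^2 - g v := by
    rw [hDdef, Real.sq_sqrt (by positivity)]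
    rw [hg]; ring
  have hD₀2 : D₀^2 = (k*v₀ + h)^2 - g v₀ := by
    rw [hD₀def, Real.sq_sqrt (by positivity)]
    rw [hg]; ring
  have hDltS : D < k*v + h := by
    refine lt_of_pow_lt_pow_left₀ 2 hSpos.le ?_
    rw [hD2]; linarith
  have hD₀ltS₀ : D₀ < k*v₀ + h := by
    refine lt_of_pow_lt_pow_left₀ 2 hS₀pos.le ?_
    rw [hD₀2]; linarith
  -- key inequality: g v * S₀² < g v₀ * S²
  have hiden := mecum_key_iden h k p q v A N T G (g v) (hg v) hAdef hNdef hTdef hGdef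
  have hvAne : v*A - N ≠ 0 := by
    intro hc
    apply hvne
    have hveq : v * A = v₀ * A := by rw [hv₀A]; linarith
    exact mul_right_cancel₀ hAne hveq
  have hkey : g v * (k*v₀ + h)^2 < g v₀ * (k*v + h)^2 := by
    have h2 : 0 < (v*A - N)^2 := by positivity
    have h1 : 0 < p^2*T^2 + k^2*G := by positivity
    have h12 : 0 < (p^2*T^2 + k^2*G) * (v*A - N)^2 := mul_pos h1 h2
    have h3 : g v * (k*v₀ + h)^2 * A^4 < g v₀ * (k*v + h)^2 * A^4 := by
      have e1 : g v * (k*v₀ + h)^2 * A^4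
          = g v * ((k*v₀ + h)*A)^2 * A^2 := by ring
      have e2 : g v₀ * (k*v + h)^2 * A^4
          = (g v₀ * A^2) * ((k*v + h)*A)^2 := by ring
      rw [e1, e2, hS₀A, hgv₀A]
      linarith only [hiden, h12]
    have hA4 : (0:ℝ) < A^4 := by positivity
    exact lt_of_mul_lt_mul_right h3 hA4.le
  -- cross-multiplied sqrt comparison: D₀ * S < D * S₀
  have hcross : D₀ * (k*v + h) < D * (k*v₀ + h) := by
    refine lt_of_pow_lt_pow_left₀ 2 (by positivity) ?_
    have e : (D * (k*v₀ + h))^2 - (D₀ * (k*v + h))^2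
        = g v₀ * (k*v + h)^2 - g v * (k*v₀ + h)^2 := by
      linear_combination (k*v₀ + h)^2 * hD2 - (k*v + h)^2 * hD₀2
    linarith only [hkey, e]
  -- rewrite f as (S - D)/(S + D)
  have hfv : f v = ((k*v + h) - D) / ((k*v + h) + D) := by
    rw [hf, ← hDdef]
    have hnum : g v = ((k*v + h) - D) * ((k*v + h) + D) := by
      linear_combination hD2
    rw [hnum]
    rw [show ((k*v + h) + D)^2 = ((k*v + h) + D) * ((k*v + h) + D) from sq _]
    rw [mul_div_mul_right _ _ (by positivity)]
  have hfv₀ : f v₀ = ((k*v₀ + h) - D₀) / ((k*v₀ + h) + D₀) := by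
    rw [hf, ← hD₀def]
    have hnum : g v₀ = ((k*v₀ + h) - D₀) * ((k*v₀ + h) + D₀) := by
      linear_combination hD₀2
    rw [hnum]
    rw [show ((k*v₀ + h) + D₀)^2 = ((k*v₀ + h) + D₀) * ((k*v₀ + h) + D₀) from sq _]
    rw [mul_div_mul_right _ _ (by positivity)]
  rw [hfv, hfv₀, div_lt_div_iff₀ (by positivity) (by positivity)]
  linarith only [hcross]
end

section
/- Let h, k, p, q be real numbers with 0 < p < h and 0 < q < k. Set v₀ = (q²k + 2kh² - hpq)/(2k²h - kpq + hp²), W = 4k²h² + (hp - qk)², g(v) = -p²v² + (4kh - 2pq)v - q², and f(v) = g(v)/((kv + h) + √((kv - h)² + (vp + q)²))². Then f(v₀) = 4kh(kh - pq)/(√W + ph + qk)². -/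
/-!
With `D = 2k²h - kpq + hp²`, `S = ph + qk` and `W = 4k²h² + (hp - qk)²`, the critical point
`v₀ = (q²k + 2kh² - hpq) / D` satisfies `kv₀ + h = W / D`, `(kv₀ - h)² + (v₀p + q)² = (S / D)² W`
and `g v₀ = 4kh(kh - pq) W / D²`. Hence the denominator of `f v₀` is `(√W (√W + S) / D)²`, and the
factor `W / D²` cancels.
-/

namespace CircumscribedEllipse

variable (h k p q : ℝ)

def critDenom : ℝ := 2*k^2*h - k*p*q + h*p^2

noncomputable def critPoint : ℝ := (q^2*k + 2*k*h^2 - h*p*q) / critDenom h k p q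

def disc : ℝ := 4*k^2*h^2 + (h*p - q*k)^2

variable {h k p q}

theorem critDenom_pos (hh : 0 < h) (hk : 0 < k) (hpq : p*q < k*h) : 0 < critDenom h k p q := by
  unfold critDenom
  nlinarith [mul_pos hk (sub_pos.2 hpq), mul_pos (mul_pos hk hk) hh, mul_nonneg hh.le (sq_nonneg p)]

theorem disc_pos (hh : h ≠ 0) (hk : k ≠ 0) : 0 < disc h k p q := by
  unfold disc
  positivity

theorem mul_critPoint_add (hD : critDenom h k p q ≠ 0) :
    k * critPoint h k p q + h = disc h k p q / critDenom h k p q := by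
  unfold critPoint disc
  field_simp
  unfold critDenom
  ring

theorem sq_add_sq_at_critPoint (hD : critDenom h k p q ≠ 0) :
    (k * critPoint h k p q - h)^2 + (critPoint h k p q * p + q)^2
      = ((p*h + q*k) / critDenom h k p q)^2 * disc h k p q := by
  unfold critPoint disc
  field_simp
  unfold critDenom
  ring

theorem quadratic_at_critPoint (hD : critDenom h k p q ≠ 0) :
    -p^2 * critPoint h k p q ^ 2 + (4*k*h - 2*p*q) * critPoint h k p q - q^2
      = 4*k*h*(k*h - p*q) * disc h k p q / critDenom h k p q ^ 2 := by
  unfold critPoint disc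
  field_simp
  unfold critDenom
  ring

end CircumscribedEllipse

theorem div_div_add_mul_sqrt_sq (N W D S : ℝ) (hW : 0 < W) (hD : D ≠ 0) :
    N * W / D^2 / (W / D + S / D * √W)^2 = N / (√W + S)^2 := by
  obtain ⟨s, hs, rfl⟩ : ∃ s, 0 < s ∧ W = s^2 := ⟨√W, Real.sqrt_pos.2 hW, (Real.sq_sqrt hW.le).symm⟩
  rw [Real.sqrt_sq hs.le, show s^2 / D + S / D * s = s * (s + S) / D by ring]
  by_cases hS : s + S = 0
  · simp [hS]
  · field_simp

open CircumscribedEllipse in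
theorem f_at_critical_point (h k p q : ℝ)
    (hp : 0 < p) (hph : p < h) (hq : 0 < q) (hqk : q < k)
    (g f : ℝ → ℝ)
    (hg : ∀ v, g v = -p^2 * v^2 + (4*k*h - 2*p*q) * v - q^2)
    (hf : ∀ v, f v = g v / ((k*v + h) + Real.sqrt ((k*v - h)^2 + (v*p + q)^2))^2)
    (v₀ W : ℝ)
    (hv₀ : v₀ = (q^2*k + 2*k*h^2 - h*p*q) / (2*k^2*h - k*p*q + h*p^2))
    (hW : W = 4*k^2*h^2 + (h*p - q*k)^2) :
    f v₀ = 4*k*h*(k*h - p*q) / (Real.sqrt W + p*h + q*k)^2 := by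
  have hh : 0 < h := hp.trans hph
  have hk : 0 < k := hq.trans hqk
  have hD : 0 < critDenom h k p q := critDenom_pos hh hk (by nlinarith)
  obtain rfl : v₀ = critPoint h k p q := hv₀
  obtain rfl : W = disc h k p q := hW
  have hsqrt : √((k * critPoint h k p q - h)^2 + (critPoint h k p q * p + q)^2)
      = (p*h + q*k) / critDenom h k p q * √(disc h k p q) := by
    rw [sq_add_sq_at_critPoint hD.ne', Real.sqrt_mul (sq_nonneg _), Real.sqrt_sq (by positivity)]
  rw [hf, hg, hsqrt, quadratic_at_critPoint hD.ne', mul_critPoint_add hD.ne',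
    div_div_add_mul_sqrt_sq _ _ _ _ (disc_pos hh.ne' hk.ne') hD.ne', add_assoc]
end

section
/- Let h, k, p, q be real numbers with 0 < p < h and 0 < q < k. Set r = √(kh)·√(kh - pq), W = 4k²h² + (hp - kq)², S = hp + kq, and T = hp - kq. Then 2r(√W - T) + 2kh(√W + S) > 0 and (4khr - (√W + S)(√W - T))/(2r(√W - T) + 2kh(√W + S)) = (r - hk)/(hp). Equivalently, 4kh²rp + hpST + 2r(r - hk)T - 2S(r - hk)kh = hpW and hp(S - T) + 2r(r - hk) + 2(r - hk)kh = 0. -/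
theorem conjugate_direction_identity (h k p q : ℝ)
    (hp : 0 < p) (hph : p < h) (hq : 0 < q) (hqk : q < k)
    (r W S T : ℝ)
    (hr : r = Real.sqrt (k*h) * Real.sqrt (k*h - p*q))
    (hW : W = 4*k^2*h^2 + (h*p - k*q)^2)
    (hS : S = h*p + k*q) (hT : T = h*p - k*q) :
    2*r*(Real.sqrt W - T) + 2*k*h*(Real.sqrt W + S) > 0 ∧
    (4*k*h*r - (Real.sqrt W + S)*(Real.sqrt W - T)) /
      (2*r*(Real.sqrt W - T) + 2*k*h*(Real.sqrt W + S)) = (r - h*k) / (h*p) ∧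
    4*k*h^2*r*p + h*p*S*T + 2*r*(r - h*k)*T - 2*S*(r - h*k)*k*h = h*p*W ∧
    h*p*(S - T) + 2*r*(r - h*k) + 2*(r - h*k)*k*h = 0 := by
  have hkh : 0 < k*h := mul_pos (hq.trans hqk) (hp.trans hph)
  have hkhpq : 0 < k*h - p*q := by nlinarith
  have hr2 : r^2 = (k*h)*(k*h - p*q) := by
    rw [hr, mul_pow, Real.sq_sqrt hkh.le, Real.sq_sqrt hkhpq.le]
  have hrnn : 0 ≤ r := by
    rw [hr]; positivity
  have hWnn : 0 ≤ W := by rw [hW]; positivity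
  have hw2 : (Real.sqrt W)^2 = W := Real.sq_sqrt hWnn
  have hwnn : 0 ≤ Real.sqrt W := Real.sqrt_nonneg W
  have hwT : T < Real.sqrt W := by nlinarith [hw2, hwnn]
  have hwS : 0 < Real.sqrt W + S := by nlinarith
  have hD : 2*r*(Real.sqrt W - T) + 2*k*h*(Real.sqrt W + S) > 0 := by nlinarith
  refine ⟨hD, ?_, ?_, ?_⟩
  · rw [div_eq_div_iff hD.ne' (mul_pos (hp.trans hph) hp).ne']
    subst hS hT
    linear_combination (-(h*p))*hw2 + (2*(h*p - k*q) - 2*Real.sqrt W)*hr2 + (-(h*p))*hW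
  · subst hS hT
    linear_combination (2*(h*p - k*q))*hr2 + (-(h*p))*hW
  · subst hS hT
    linear_combination 2*hr2
end

section
/- Let s, t be positive real numbers with s + t > 1, s ≠ 1, t ≠ 1. Define α(u) = s²(s-1)²u² - 2st(st + s + t - 1)u + t²(t-1)², let (m, M) be the open interval on which α < 0, and define β(u) = -4u²(su + t)²s²t²(st(s + t - 1))²/(α(u))³ for u ∈ (m, M). Then β attains a strict global minimum on (m, M) at a unique point; that is, there exists a unique u* ∈ (m, M) such that β(u) > β(u*) for all u ∈ (m, M) with u ≠ u*. -/
/-!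
On `(m, M)` write `β = -K g² / α³` with `g u = u (s u + t)`; then `β' = K g q / α⁴` for the cubic
`q = 3 g α' - 2 g' α`. The endpoints `m < M` are the roots of `α`, and `m > 0` because `α > 0` on
`(-∞, 0]`. At the roots `q = 3 g α'` has the sign of `α'`, negative at `m` and positive at `M`.
Since `q u / u²` is strictly increasing for `u > 0`, `q` changes sign exactly once in `(m, M)`:
`β` strictly decreases and then strictly increases, so it has exactly one strict minimiser.
-/

open Set

def IsStrictMinOn {α β : Type*} [Preorder β] (f : α → β) (S : Set α) (x : α) : Prop :=
  x ∈ S ∧ ∀ y ∈ S, y ≠ x → f x < f y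

theorem IsStrictMinOn.eq {α β : Type*} [Preorder β] {f : α → β} {S : Set α} {x y : α}
    (hx : IsStrictMinOn f S x) (hy : IsStrictMinOn f S y) : x = y := by
  by_contra hxy
  exact lt_asymm (hx.2 y hy.1 (Ne.symm hxy)) (hy.2 x hx.1 hxy)

theorem existsUnique_of_isStrictMinOn {α β : Type*} [Preorder β] {f : α → β} {S : Set α} {x : α}
    (hx : IsStrictMinOn f S x) : ∃! x, IsStrictMinOn f S x :=
  ⟨x, hx, fun _ hy => hy.eq hx⟩

theorem isStrictMinOn_Ioo_of_hasDerivAt {f f' : ℝ → ℝ} {a b c : ℝ} (hc : c ∈ Ioo a b)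
    (hf : ∀ x ∈ Ioo a b, HasDerivAt f (f' x) x)
    (hneg : ∀ x ∈ Ioo a c, f' x < 0) (hpos : ∀ x ∈ Ioo c b, 0 < f' x) :
    IsStrictMinOn f (Ioo a b) c := by
  have hcont : ContinuousOn f (Ioo a b) := fun x hx => (hf x hx).continuousAt.continuousWithinAt
  have hanti : StrictAntiOn f (Ioc a c) := by
    refine strictAntiOn_of_hasDerivWithinAt_neg (f' := f') (convex_Ioc a c)
      (hcont.mono (Ioc_subset_Ioo_right hc.2)) (fun x hx => ?_) (fun x hx => ?_)
    all_goals simp only [interior_Ioc] at hx ⊢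
    exacts [(hf x ⟨hx.1, hx.2.trans hc.2⟩).hasDerivWithinAt, hneg x hx]
  have hmono : StrictMonoOn f (Ico c b) := by
    refine strictMonoOn_of_hasDerivWithinAt_pos (f' := f') (convex_Ico c b)
      (hcont.mono (Ico_subset_Ioo_left hc.1)) (fun x hx => ?_) (fun x hx => ?_)
    all_goals simp only [interior_Ico] at hx ⊢
    exacts [(hf x ⟨hc.1.trans hx.1, hx.2⟩).hasDerivWithinAt, hpos x hx]
  refine ⟨hc, fun y hy hyc => ?_⟩
  rcases hyc.lt_or_gt with hyc | hyc
  · exact hanti ⟨hy.1, hyc.le⟩ ⟨hc.1, le_rfl⟩ hyc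
  · exact hmono ⟨le_rfl, hc.2⟩ ⟨hyc.le, hy.2⟩ hyc

theorem StrictMonoOn.exists_neg_pos_of_continuousOn {α δ : Type*}
    [ConditionallyCompleteLinearOrder α] [TopologicalSpace α] [OrderTopology α] [DenselyOrdered α]
    [LinearOrder δ] [TopologicalSpace δ] [OrderClosedTopology δ] [Zero δ]
    {h : α → δ} {a b : α} (hab : a ≤ b)
    (hmono : StrictMonoOn h (Icc a b)) (hcont : ContinuousOn h (Icc a b)) (ha : h a < 0)
    (hb : 0 < h b) : ∃ c ∈ Ioo a b, (∀ x ∈ Ioo a c, h x < 0) ∧ ∀ x ∈ Ioo c b, 0 < h x := by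
  obtain ⟨c, hc, hc0⟩ := intermediate_value_Ioo hab hcont ⟨ha, hb⟩
  refine ⟨c, hc, fun x hx => hc0 ▸ ?_, fun x hx => hc0 ▸ ?_⟩
  · exact hmono ⟨hx.1.le, (hx.2.trans hc.2).le⟩ (Ioo_subset_Icc_self hc) hx.2
  · exact hmono (Ioo_subset_Icc_self hc) ⟨(hc.1.trans hx.1).le, hx.2.le⟩ hx.1

theorem eq_zero_of_neg_iff_mem_Ioo {α δ : Type*}
    [TopologicalSpace α] [LinearOrder α] [OrderTopology α] [DenselyOrdered α]
    [LinearOrder δ] [TopologicalSpace δ] [OrderClosedTopology δ] [Zero δ]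
    {f : α → δ} (hf : Continuous f) {m M : α} (hmM : m < M)
    (hI : ∀ u, f u < 0 ↔ u ∈ Ioo m M) : f m = 0 ∧ f M = 0 := by
  have hle : Icc m M ⊆ {u | f u ≤ 0} := by
    have hset : Ioo m M = {u | f u < 0} := by ext u; exact (hI u).symm
    rw [← closure_Ioo hmM.ne, hset]
    exact closure_lt_subset_le hf continuous_const
  have hge : ∀ u ∉ Ioo m M, 0 ≤ f u := fun u hu => not_lt.1 (mt (hI u).1 hu)
  exact ⟨le_antisymm (hle (left_mem_Icc.2 hmM.le)) (hge m fun h => h.1.false),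
    le_antisymm (hle (right_mem_Icc.2 hmM.le)) (hge M fun h => h.2.false)⟩

theorem hasDerivAt_sq_div_pow_three {𝕜 : Type*} [NontriviallyNormedField 𝕜] {g p : 𝕜 → 𝕜}
    {g' p' x : 𝕜} (hg : HasDerivAt g g' x) (hp : HasDerivAt p p' x) (hpx : p x ≠ 0) :
    HasDerivAt (fun y => g y ^ 2 / p y ^ 3)
      (-(g x * (3 * g x * p' - 2 * g' * p x)) / p x ^ 4) x := by
  refine ((hg.fun_pow 2).fun_div (hp.fun_pow 3) (pow_ne_zero 3 hpx)).congr_deriv ?_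
  field_simp
  ring

section

variable {a b c s t : ℝ}

theorem quadratic_pos_of_nonpos (ha : 0 ≤ a) (hb : 0 ≤ b) (hc : 0 < c) {u : ℝ} (hu : u ≤ 0) :
    0 < a * u ^ 2 - b * u + c := by
  nlinarith [mul_nonneg ha (sq_nonneg u), mul_nonneg hb (neg_nonneg.2 hu)]

theorem quadratic_neg_at_vertex (ha : 0 < a) (hdisc : 4 * a * c < b ^ 2) :
    a * (b / (2 * a)) ^ 2 - b * (b / (2 * a)) + c < 0 := by
  have hvertex :
      a * (b / (2 * a)) ^ 2 - b * (b / (2 * a)) + c = (4 * a * c - b ^ 2) / (4 * a) := by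
    field_simp
    ring
  rw [hvertex]
  exact div_neg_of_neg_of_pos (by linarith) (by positivity)

theorem add_roots_of_quadratic {m M : ℝ} (hmM : m ≠ M) (hm : a * m ^ 2 - b * m + c = 0)
    (hM : a * M ^ 2 - b * M + c = 0) : a * (m + M) = b := by
  have h : (m - M) * (a * (m + M) - b) = 0 := by linear_combination hm - hM
  rcases mul_eq_zero.1 h with h | h
  · exact absurd (sub_eq_zero.1 h) hmM
  · linarith

/-- `3 g p' - 2 g' p` for `g u = s u² + t u` and `p u = a u² - b u + c`. -/
def critPoly (a b c s t u : ℝ) : ℝ :=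
  3 * (s * u ^ 2 + t * u) * (2 * a * u - b) - 2 * (2 * s * u + t) * (a * u ^ 2 - b * u + c)

theorem critPoly_of_root {u : ℝ} (hu : a * u ^ 2 - b * u + c = 0) :
    critPoly a b c s t u = 3 * (s * u ^ 2 + t * u) * (2 * a * u - b) := by
  simp [critPoly, hu]

theorem critPoly_div_sq_strictMonoOn (ha : 0 ≤ a) (hb : 0 ≤ b) (hc : 0 < c) (hs : 0 ≤ s)
    (ht : 0 < t) : StrictMonoOn (fun u => critPoly a b c s t u / u ^ 2) (Ioi 0) := by
  intro u (hu : 0 < u) v (hv : 0 < v) huv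
  rw [div_lt_div_iff₀ (by positivity) (by positivity)]
  set w := 2 * a * s * (u ^ 2 * v ^ 2) + (b * t + 4 * c * s) * (u * v) + 2 * c * t * (u + v)
  have hfactor : critPoly a b c s t v * u ^ 2 - critPoly a b c s t u * v ^ 2 = (v - u) * w := by
    unfold critPoly
    ring
  have hw : 0 < w := by positivity
  nlinarith [mul_pos (sub_pos.2 huv) hw]

theorem exists_critPoly_sign_change (ha : 0 < a) (hb : 0 ≤ b) (hc : 0 < c) (hs : 0 < s)
    (ht : 0 < t) {m M : ℝ} (hm : 0 < m) (hmM : m < M) (hpm : a * m ^ 2 - b * m + c = 0)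
    (hpM : a * M ^ 2 - b * M + c = 0) :
    ∃ x₀ ∈ Ioo m M, (∀ x ∈ Ioo m x₀, critPoly a b c s t x < 0) ∧
      ∀ x ∈ Ioo x₀ M, 0 < critPoly a b c s t x := by
  have hM : 0 < M := hm.trans hmM
  have hsum := add_roots_of_quadratic hmM.ne hpm hpM
  have hgap : 0 < a * (M - m) := mul_pos ha (sub_pos.2 hmM)
  -- by Vieta, the slope `2 a u - b` of the quadratic is `∓ a (M - m)` at its roots
  have hqm : critPoly a b c s t m < 0 := by
    rw [critPoly_of_root hpm, show 2 * a * m - b = -(a * (M - m)) by linarith]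
    exact mul_neg_of_pos_of_neg (by positivity) (neg_neg_of_pos hgap)
  have hqM : 0 < critPoly a b c s t M := by
    rw [critPoly_of_root hpM, show 2 * a * M - b = a * (M - m) by linarith]
    positivity
  have hIcc : Icc m M ⊆ Ioi 0 := fun x hx => hm.trans_le hx.1
  obtain ⟨x₀, hx₀, hneg, hpos⟩ := StrictMonoOn.exists_neg_pos_of_continuousOn hmM.le
    ((critPoly_div_sq_strictMonoOn ha.le hb hc hs.le ht).mono hIcc)
    (ContinuousOn.div (by unfold critPoly; fun_prop) (by fun_prop)
      fun x hx => pow_ne_zero 2 (hIcc hx).ne')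
    (div_neg_of_neg_of_pos hqm (by positivity)) (div_pos hqM (by positivity))
  refine ⟨x₀, hx₀, fun x hx => ?_, fun x hx => ?_⟩
  · exact neg_of_div_neg_left (hneg x hx) (sq_nonneg x)
  · have hx0 : 0 < x := hm.trans (hx₀.1.trans hx.1)
    exact (div_pos_iff_of_pos_right (by positivity)).1 (hpos x hx)

theorem hasDerivAt_sq_div_pow_three_quadratic {x : ℝ} (hpx : a * x ^ 2 - b * x + c ≠ 0) :
    HasDerivAt (fun u => (s * u ^ 2 + t * u) ^ 2 / (a * u ^ 2 - b * u + c) ^ 3)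
      (-((s * x ^ 2 + t * x) * critPoly a b c s t x) / (a * x ^ 2 - b * x + c) ^ 4) x := by
  have hg : HasDerivAt (fun u => s * u ^ 2 + t * u) (2 * s * x + t) x := by
    refine (((hasDerivAt_pow 2 x).const_mul s).add ((hasDerivAt_id x).const_mul t)).congr_deriv ?_
    simp only [Nat.cast_ofNat, Nat.add_one_sub_one, pow_one, mul_one]
    ring
  have hp : HasDerivAt (fun u => a * u ^ 2 - b * u + c) (2 * a * x - b) x := by
    refine ((((hasDerivAt_pow 2 x).const_mul a).sub ((hasDerivAt_id x).const_mul b)).add_const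
      c).congr_deriv ?_
    simp only [Nat.cast_ofNat, Nat.add_one_sub_one, pow_one, mul_one]
    ring
  exact hasDerivAt_sq_div_pow_three hg hp hpx

end

theorem existsUnique_isStrictMinOn_neg_mul_sq_div_cube {a b c s t K m M : ℝ} {α β : ℝ → ℝ}
    (ha : 0 < a) (hb : 0 ≤ b) (hc : 0 < c) (hs : 0 < s) (ht : 0 < t) (hK : 0 < K)
    (hdisc : 4 * a * c < b ^ 2) (hα : ∀ u, α u = a * u ^ 2 - b * u + c)
    (hβ : ∀ u, β u = -K * ((s * u ^ 2 + t * u) ^ 2 / α u ^ 3))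
    (hI : ∀ u, α u < 0 ↔ u ∈ Ioo m M) : ∃! u₀, IsStrictMinOn β (Ioo m M) u₀ := by
  obtain rfl : α = fun u => a * u ^ 2 - b * u + c := funext hα
  have hmM : m < M := by
    obtain ⟨h₁, h₂⟩ := (hI _).1 (quadratic_neg_at_vertex ha hdisc)
    exact h₁.trans h₂
  obtain ⟨hpm, hpM⟩ := eq_zero_of_neg_iff_mem_Ioo (by fun_prop) hmM hI
  have hm : 0 < m := lt_of_not_ge fun h => (quadratic_pos_of_nonpos ha.le hb hc h).ne' hpm
  obtain ⟨x₀, hx₀, hneg, hpos⟩ := exists_critPoly_sign_change ha hb hc hs ht hm hmM hpm hpM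
  have hderiv : ∀ x ∈ Ioo m M, HasDerivAt β
      (K * ((s * x ^ 2 + t * x) * critPoly a b c s t x) / (a * x ^ 2 - b * x + c) ^ 4) x := by
    intro x hx
    rw [funext hβ]
    refine ((hasDerivAt_sq_div_pow_three_quadratic ((hI x).2 hx).ne).const_mul
      (-K)).congr_deriv ?_
    ring
  have hweight : ∀ x ∈ Ioo m M, 0 < s * x ^ 2 + t * x ∧ 0 < (a * x ^ 2 - b * x + c) ^ 4 :=
    fun x hx => ⟨by have := hm.trans hx.1; positivity,
      Even.pow_pos (by decide) ((hI x).2 hx).ne⟩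
  refine existsUnique_of_isStrictMinOn (isStrictMinOn_Ioo_of_hasDerivAt hx₀ hderiv
    (fun x hx => ?_) (fun x hx => ?_))
  · obtain ⟨hg, hp⟩ := hweight x ⟨hx.1, hx.2.trans hx₀.2⟩
    exact div_neg_of_neg_of_pos
      (mul_neg_of_pos_of_neg hK (mul_neg_of_pos_of_neg hg (hneg x hx))) hp
  · obtain ⟨hg, hp⟩ := hweight x ⟨hx₀.1.trans hx.1, hx.2⟩
    exact div_pos (mul_pos hK (mul_pos hg (hpos x hx))) hp

theorem minimal_area_circumscribed_unique (s t : ℝ) (hs : 0 < s) (ht : 0 < t)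
    (hst : s + t > 1) (hs1 : s ≠ 1) (ht1 : t ≠ 1)
    (α β : ℝ → ℝ)
    (hα : ∀ u, α u = s^2*(s-1)^2*u^2 - 2*s*t*(s*t + s + t - 1)*u + t^2*(t-1)^2)
    (hβ : ∀ u, β u = -(4*u^2*(s*u + t)^2*s^2*t^2*(s*t*(s + t - 1))^2) / (α u)^3)
    (m M : ℝ) (hI : ∀ u : ℝ, α u < 0 ↔ u ∈ Set.Ioo m M) :
    ∃! u₀ : ℝ, u₀ ∈ Set.Ioo m M ∧
      ∀ u ∈ Set.Ioo m M, u ≠ u₀ → β u₀ < β u := by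
  have hst' : 0 < s + t - 1 := by linarith
  have hs1' : s - 1 ≠ 0 := sub_ne_zero.2 hs1
  have ht1' : t - 1 ≠ 0 := sub_ne_zero.2 ht1
  have hb : 0 < 2*s*t*(s*t + s + t - 1) := mul_pos (by positivity) (by nlinarith [mul_pos hs ht])
  have hdisc : 4*(s^2*(s-1)^2)*(t^2*(t-1)^2) < (2*s*t*(s*t + s + t - 1))^2 := by
    have hdisc_eq : (2*s*t*(s*t + s + t - 1))^2 - 4*(s^2*(s-1)^2)*(t^2*(t-1)^2)
        = 16 * s^3 * t^3 * (s + t - 1) := by ring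
    have : 0 < 16 * s^3 * t^3 * (s + t - 1) := by positivity
    linarith
  exact existsUnique_isStrictMinOn_neg_mul_sq_div_cube (K := 4*s^2*t^2*(s*t*(s + t - 1))^2)
    (by positivity) hb.le (by positivity) hs ht (by positivity) hdisc hα
    (fun u => by rw [hβ u]; ring) hI
end

section
/- Let s, t be positive real numbers with s + t > 1, s ≠ 1, t ≠ 1, let α(u) = s²(s-1)²u² - 2st(st + s + t - 1)u + t²(t-1)², and let u be a real number with α(u) < 0. Define x₀ = st((2st + s² - s)u + (t² - t))/(2st(st + s + t - 1)u - s²(s-1)²u² - t²(t-1)²) and y₀ = st((2st + t² - t)u + (s² - s)u²)/(2st(st + s + t - 1)u - s²(s-1)²u² - t²(t-1)²). Then (x₀, y₀) does not lie on the open line segment joining (1/2, 1/2) and (s/2, t/2); more precisely, if y₀ = (s - t + 2x₀(t - 1))/(2(s - 1)) then x₀ = 1/2 or x₀ = s/2. -/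
/-!
Write the centre as `x₀ = X / D`, `y₀ = Y / D`, where `D = -α(u) > 0`. The midpoint line
`2(s-1)y = s - t + 2(t-1)x` evaluated at the centre has residual
`(2(s-1)Y - 2(t-1)X - (s-t)D) / D`, and the numerator factors as
`(s+t)(s(s-1)u - t(t-1))(s(s-1)u + t(t-1))`. So on that line `s(s-1)u = ±t(t-1)`, and these
two cases put `x₀` at `s/2` and `1/2` respectively: the centre can only meet the line at the
midpoints of the diagonals, which are not in the open segment.
-/

section CircumCenter

variable {R : Type*} [CommRing R] (s t u : R)

def circumCenterDenom : R :=
  2*s*t*(s*t + s + t - 1)*u - s^2*(s-1)^2*u^2 - t^2*(t-1)^2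

def circumCenterNumX : R :=
  s*t*((2*s*t + s^2 - s)*u + (t^2 - t))

def circumCenterNumY : R :=
  s*t*((2*s*t + t^2 - t)*u + (s^2 - s)*u^2)

theorem midpointLine_residual_factor :
    2*(s-1)*circumCenterNumY s t u - 2*(t-1)*circumCenterNumX s t u
        - (s-t)*circumCenterDenom s t u =
      (s+t)*(s*(s-1)*u - t*(t-1))*(s*(s-1)*u + t*(t-1)) := by
  unfold circumCenterNumY circumCenterNumX circumCenterDenom
  ring

variable {s t u}

theorem two_mul_circumCenterNumX_of_eq (h : s*(s-1)*u = t*(t-1)) :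
    2 * circumCenterNumX s t u = s * circumCenterDenom s t u := by
  unfold circumCenterNumX circumCenterDenom
  linear_combination s*(s*(s-1)*u - t*(t+1)) * h

theorem two_mul_circumCenterNumX_of_eq_neg (h : s*(s-1)*u = -(t*(t-1))) :
    2 * circumCenterNumX s t u = circumCenterDenom s t u := by
  unfold circumCenterNumX circumCenterDenom
  linear_combination (s*(s-1)*u + t*(2*s+t-1)) * h

end CircumCenter

theorem circumCenter_x_eq_of_mem_midpointLine {K : Type*} [Field K] [NeZero (2 : K)]
    {s t u : K} (hD : circumCenterDenom s t u ≠ 0) (hst : s + t ≠ 0) (hs1 : s ≠ 1)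
    (hline : circumCenterNumY s t u / circumCenterDenom s t u =
      (s - t + 2*(circumCenterNumX s t u / circumCenterDenom s t u)*(t - 1)) / (2*(s - 1))) :
    circumCenterNumX s t u / circumCenterDenom s t u = 1/2 ∨
      circumCenterNumX s t u / circumCenterDenom s t u = s/2 := by
  have hs1' : (2 : K) * (s - 1) ≠ 0 := mul_ne_zero two_ne_zero (sub_ne_zero.mpr hs1)
  have hresidual : 2*(s-1)*circumCenterNumY s t u - 2*(t-1)*circumCenterNumX s t u
      - (s-t)*circumCenterDenom s t u = 0 := by
    field_simp at hline
    linear_combination hline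
  rw [midpointLine_residual_factor, mul_eq_zero, mul_eq_zero] at hresidual
  rw [div_eq_div_iff hD two_ne_zero, div_eq_div_iff hD two_ne_zero]
  rcases hresidual with (hst0 | hminus) | hplus
  · exact absurd hst0 hst
  · right
    linear_combination two_mul_circumCenterNumX_of_eq (sub_eq_zero.mp hminus)
  · left
    linear_combination two_mul_circumCenterNumX_of_eq_neg (eq_neg_of_add_eq_zero_left hplus)

section DiagonalMidpoints

variable {𝕜 : Type*} [Field 𝕜] [LinearOrder 𝕜] [IsStrictOrderedRing 𝕜] {s t x y : 𝕜}

theorem midpointLine_of_mem_openSegment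
    (h : (x, y) ∈ openSegment 𝕜 ((1/2 : 𝕜), (1/2 : 𝕜)) (s/2, t/2)) :
    2*(s-1)*y = s - t + 2*x*(t-1) := by
  obtain ⟨a, b, -, -, hab, hxy⟩ := h
  simp only [Prod.smul_mk, smul_eq_mul, Prod.mk_add_mk, Prod.mk.injEq] at hxy
  linear_combination (2*(t-1)) * hxy.1 - (2*(s-1)) * hxy.2 + (s-t) * hab

theorem fst_ne_of_mem_openSegment (hs1 : s ≠ 1)
    (h : (x, y) ∈ openSegment 𝕜 ((1/2 : 𝕜), (1/2 : 𝕜)) (s/2, t/2)) :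
    x ≠ 1/2 ∧ x ≠ s/2 := by
  have hx : x ∈ openSegment 𝕜 (1/2 : 𝕜) (s/2) := (Prod.openSegment_subset _ _ h).1
  have hends : (1/2 : 𝕜) ≠ s/2 := fun h => hs1 (by linarith)
  refine ⟨?_, ?_⟩ <;> rintro rfl
  · exact hends (left_mem_openSegment_iff.mp hx)
  · exact hends (right_mem_openSegment_iff.mp hx)

end DiagonalMidpoints

theorem circumscribed_center_not_on_inscribed_locus_general (s t : ℝ)
    (hst : s + t > 1) (hs1 : s ≠ 1)
    (u : ℝ)
    (hu : s^2*(s-1)^2*u^2 - 2*s*t*(s*t + s + t - 1)*u + t^2*(t-1)^2 < 0)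
    (x₀ y₀ : ℝ)
    (hx₀ : x₀ = s*t*((2*s*t + s^2 - s)*u + (t^2 - t)) /
      (2*s*t*(s*t + s + t - 1)*u - s^2*(s-1)^2*u^2 - t^2*(t-1)^2))
    (hy₀ : y₀ = s*t*((2*s*t + t^2 - t)*u + (s^2 - s)*u^2) /
      (2*s*t*(s*t + s + t - 1)*u - s^2*(s-1)^2*u^2 - t^2*(t-1)^2)) :
    (x₀, y₀) ∉ openSegment ℝ ((1/2 : ℝ), (1/2 : ℝ)) (s/2, t/2) ∧
    (y₀ = (s - t + 2*x₀*(t - 1)) / (2*(s - 1)) → x₀ = 1/2 ∨ x₀ = s/2) := by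
  have hD : circumCenterDenom s t u ≠ 0 := by
    unfold circumCenterDenom; linarith
  have on_line : y₀ = (s - t + 2*x₀*(t - 1)) / (2*(s - 1)) → x₀ = 1/2 ∨ x₀ = s/2 := by
    subst hx₀ hy₀
    exact circumCenter_x_eq_of_mem_midpointLine hD (by linarith) hs1
  refine ⟨fun hmem => ?_, on_line⟩
  have hline : y₀ = (s - t + 2*x₀*(t - 1)) / (2*(s - 1)) := by
    rw [eq_div_iff (mul_ne_zero two_ne_zero (sub_ne_zero.mpr hs1))]
    linear_combination midpointLine_of_mem_openSegment hmem
  obtain ⟨hx_left, hx_right⟩ := fst_ne_of_mem_openSegment hs1 hmem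
  rcases on_line hline with h | h
  exacts [hx_left h, hx_right h]

theorem circumscribed_center_not_on_inscribed_locus (s t : ℝ) (hs : 0 < s) (ht : 0 < t)
    (hst : s + t > 1) (hs1 : s ≠ 1) (ht1 : t ≠ 1)
    (u : ℝ)
    (hu : s^2*(s-1)^2*u^2 - 2*s*t*(s*t + s + t - 1)*u + t^2*(t-1)^2 < 0)
    (x₀ y₀ : ℝ)
    (hx₀ : x₀ = s*t*((2*s*t + s^2 - s)*u + (t^2 - t)) /
      (2*s*t*(s*t + s + t - 1)*u - s^2*(s-1)^2*u^2 - t^2*(t-1)^2))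
    (hy₀ : y₀ = s*t*((2*s*t + t^2 - t)*u + (s^2 - s)*u^2) /
      (2*s*t*(s*t + s + t - 1)*u - s^2*(s-1)^2*u^2 - t^2*(t-1)^2)) :
    (x₀, y₀) ∉ openSegment ℝ ((1/2 : ℝ), (1/2 : ℝ)) (s/2, t/2) ∧
    (y₀ = (s - t + 2*x₀*(t - 1)) / (2*(s - 1)) → x₀ = 1/2 ∨ x₀ = s/2) :=
  circumscribed_center_not_on_inscribed_locus_general s t hst hs1 u hu x₀ y₀ hx₀ hy₀
end

section
/- Let t > 0 with t ≠ 1, and let u be a real number with u > (t-1)²/4. Then (2u + t - 1)/(4u - (t-1)²) ≠ 1/2. -/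
theorem trapezoid_center_x_ne_half (t u : ℝ) (ht : 0 < t) (ht1 : t ≠ 1)
    (hu : u > (t-1)^2/4) :
    (2*u + t - 1) / (4*u - (t-1)^2) ≠ 1/2 := by
  have hd : 4*u - (t-1)^2 > 0 := by nlinarith
  intro h
  have := div_eq_div_iff hd.ne' (two_ne_zero) |>.mp h
  have h2 : (t-1)*(t+1) = 0 := by nlinarith
  rcases mul_eq_zero.mp h2 with h | h
  · exact ht1 (by linarith)
  · linarith
end

section
/- Let t > 0 with t ≠ 1, and define ε(u) = 2√((t-1)² + (u-1)²)/(u + 1 + √((t-1)² + (u-1)²)) for u ∈ ((t-1)²/4, ∞). Then u₀ = (t² - 2t + 3)/2 lies in ((t-1)²/4, ∞), ε attains a strict global minimum on this interval at u₀, and ε(u₀) = 2|t-1|/(√((t-1)² + 4) + |t-1|) < 1. -/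
set_option maxHeartbeats 1600000 in
theorem trapezoid_minimal_eccentricity (t : ℝ) (ht : 0 < t) (ht1 : t ≠ 1)
    (ε : ℝ → ℝ)
    (hε : ∀ u, ε u = 2*Real.sqrt ((t-1)^2 + (u-1)^2) /
      (u + 1 + Real.sqrt ((t-1)^2 + (u-1)^2)))
    (u₀ : ℝ) (hu₀ : u₀ = (t^2 - 2*t + 3)/2) :
    u₀ ∈ Set.Ioi ((t-1)^2/4) ∧
    (∀ u ∈ Set.Ioi ((t-1)^2/4), u ≠ u₀ → ε u₀ < ε u) ∧
    ε u₀ = 2*|t-1| / (Real.sqrt ((t-1)^2 + 4) + |t-1|) ∧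
    ε u₀ < 1 := by
  have ha : (0:ℝ) < (t-1)^2 := by
    have : t - 1 ≠ 0 := sub_ne_zero.mpr ht1
    positivity
  set a : ℝ := (t-1)^2 with hadef
  have hu0 : u₀ = (a + 2)/2 := by rw [hu₀, hadef]; ring
  -- S = sqrt(a+4)
  set S : ℝ := Real.sqrt (a + 4) with hSdef
  have hSpos : 0 < S := Real.sqrt_pos.mpr (by linarith)
  have hS2 : S^2 = a + 4 := Real.sq_sqrt (by linarith)
  have habs : |t-1|^2 = a := sq_abs _
  have habsnn : 0 ≤ |t-1| := abs_nonneg _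
  have habspos : 0 < |t-1| := by
    rcases habsnn.lt_or_eq with h | h
    · exact h
    · exfalso; nlinarith
  -- s₀ computation
  set s₀ : ℝ := Real.sqrt (a + (u₀-1)^2) with hs0def
  have hsq : (|t-1| * S / 2)^2 = a * (a + 4) / 4 := by
    rw [div_pow, mul_pow, habs, hS2]; norm_num
  have hs0 : s₀ = |t-1| * S / 2 := by
    rw [hs0def, show a + (u₀-1)^2 = (|t-1| * S / 2)^2 by rw [hsq, hu0]; ring,
      Real.sqrt_sq (by positivity)]
  have hs0pos : 0 < s₀ := Real.sqrt_pos.mpr (by positivity)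
  have hu0pos : 0 < u₀ + 1 := by rw [hu0]; linarith
  have hden0 : 0 < u₀ + 1 + s₀ := by linarith
  -- value of ε u₀
  have hval : ε u₀ = 2*|t-1| / (S + |t-1|) := by
    rw [hε u₀, ← hs0def, hs0, hu0]
    rw [div_eq_div_iff (by nlinarith) (by positivity)]
    nlinarith
  have hs02 : s₀^2 = a + (u₀-1)^2 := Real.sq_sqrt (by positivity)
  clear_value a S s₀
  refine ⟨?_, ?_, hval, ?_⟩
  · simp only [Set.mem_Ioi]
    rw [hu0]; linarith
  · intro u hu hne
    simp only [Set.mem_Ioi] at hu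
    have hupos : 0 < u + 1 := by nlinarith
    set s : ℝ := Real.sqrt (a + (u-1)^2) with hsdef
    have hspos : 0 < s := Real.sqrt_pos.mpr (by positivity)
    have hs2 : s^2 = a + (u-1)^2 := Real.sq_sqrt (by positivity)
    clear_value s
    have hden : 0 < u + 1 + s := by linarith
    -- key: s₀(u+1) < s(u₀+1)
    have hkey : s₀ * (u + 1) < s * (u₀ + 1) := by
      have hsq : (s₀ * (u + 1))^2 < (s * (u₀ + 1))^2 := by
        have hdiff : (0:ℝ) < (u - u₀)^2 := by
          have : u - u₀ ≠ 0 := sub_ne_zero.mpr hne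
          positivity
        have hD : (s * (u₀ + 1))^2 - (s₀ * (u + 1))^2 = (a+4) * (u - u₀)^2 := by
          rw [mul_pow, mul_pow, hs2, hs02, hu0]; ring
        nlinarith
      exact lt_of_pow_lt_pow_left₀ 2 (by positivity) hsq
    have hfinal : 2*s₀/(u₀+1+s₀) < 2*s/(u+1+s) := by
      rw [div_lt_div_iff₀ hden0 hden]
      nlinarith [hkey]
    rw [hε u, hε u₀, ← hsdef, ← hs0def]
    exact hfinal
  · rw [hval, div_lt_one (by positivity)]
    have : |t-1| < S := by
      refine lt_of_pow_lt_pow_left₀ 2 hSpos.le ?_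
      rw [hS2, habs]; linarith
    linarith
end

section
/- For r ∈ (0,1), let s = -3r/2 + 2 and t = r(1 + √2)/2 + 2 - 2r. Then (2s - 1)² + (2t - 1)² - 2 = -(2/41)(3√2 - 10)(r - 1)(41r - 40 - 12√2); consequently, for every r ∈ (0,1) one has (2s - 1)² + (2t - 1)² ≠ 2 and s ≠ t. Moreover s + t > 1, s ≠ 1 and t ≠ 1 except when r = 2/3 (where s = 1). -/
theorem family_neither_cyclic_nor_tangential (r : ℝ) (hr : r ∈ Set.Ioo (0:ℝ) 1)
    (s t : ℝ) (hs : s = -3*r/2 + 2) (ht : t = r*(1 + Real.sqrt 2)/2 + 2 - 2*r) :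
    (2*s - 1)^2 + (2*t - 1)^2 - 2 =
      -(2/41)*(3*Real.sqrt 2 - 10)*(r - 1)*(41*r - 40 - 12*Real.sqrt 2) ∧
    (2*s - 1)^2 + (2*t - 1)^2 ≠ 2 ∧
    s ≠ t ∧
    s + t > 1 ∧
    t ≠ 1 ∧
    (r ≠ 2/3 → s ≠ 1) ∧
    (r = 2/3 → s = 1) := by
  obtain ⟨hr0, hr1⟩ := hr
  set c := Real.sqrt 2 with hcdef
  have hc : c^2 = 2 := Real.sq_sqrt (by norm_num)
  have hc1 : 1 < c := by nlinarith [Real.sqrt_nonneg 2]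
  have hc2 : c < 3/2 := by nlinarith [Real.sqrt_nonneg 2]
  subst hs ht
  have hid : (2*(-3*r/2 + 2) - 1)^2 + (2*(r*(1 + c)/2 + 2 - 2*r) - 1)^2 - 2 =
      -(2/41)*(3*c - 10)*(r - 1)*(41*r - 40 - 12*c) := by
    linear_combination (r^2 - 72/41*r + 72/41) * hc
  refine ⟨hid, ?_, ?_, ?_, ?_, ?_, ?_⟩
  · intro h
    have := hid
    rw [h] at this
    nlinarith
  · intro h
    nlinarith
  · nlinarith
  · intro h
    nlinarith
  · intro h hs1
    have : r = 2/3 := by nlinarith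
    exact h this
  · intro h; rw [h]; ring
end

section
/- Let t > 0 with t ≠ 1, and define c(k) = 16k³ - 12(t+1)k² + 4(2t - 1)k + t + 1. Then c has exactly one root in the open interval with endpoints 1/2 and t/2. -/
/-!
The cubic takes the values `2(t - 1)` at `1/2` and `-(t - 1)(t² + 1)` at `t/2`, which have opposite
signs for `t ≠ 1`, so it has a root between them. Its derivative is
`48 (k - 1/2)(k - t/2) - 4(t + 1)`, which is negative strictly between `1/2` and `t/2`, so the
cubic is strictly decreasing there and the root is unique.
-/

open Set

section IntermediateValue

variable {α δ : Type*} [ConditionallyCompleteLinearOrder α] [TopologicalSpace α] [OrderTopology α]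
  [DenselyOrdered α] [LinearOrder δ] [TopologicalSpace δ] [OrderClosedTopology δ]

theorem intermediate_value_uIoo {a b : α} {f : α → δ} (hf : ContinuousOn f (uIcc a b)) :
    uIoo (f a) (f b) ⊆ f '' uIoo a b := by
  wlog hab : a ≤ b generalizing a b
  · rw [uIoo_comm, uIoo_comm a]
    exact this (uIcc_comm a b ▸ hf) (le_of_not_ge hab)
  rw [uIcc_of_le hab] at hf
  rw [uIoo_of_le hab, uIoo_eq_union]
  exact union_subset (intermediate_value_Ioo hab hf) (intermediate_value_Ioo' hab hf)

theorem existsUnique_mem_uIoo_of_injOn {a b : α} {f : α → δ} (hf : ContinuousOn f (uIcc a b))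
    (hinj : InjOn f (uIoo a b)) {y : δ} (hy : y ∈ uIoo (f a) (f b)) :
    ∃! x, x ∈ uIoo a b ∧ f x = y := by
  obtain ⟨x, hx, rfl⟩ := intermediate_value_uIoo hf hy
  exact ⟨x, ⟨hx, rfl⟩, fun x' ⟨hx', hfx'⟩ => hinj hx' hx hfx'⟩

end IntermediateValue

theorem sub_mul_sub_neg_of_mem_uIoo {R : Type*} [Ring R] [LinearOrder R] [IsStrictOrderedRing R]
    {a b x : R} (hx : x ∈ uIoo a b) : (x - a) * (x - b) < 0 := by
  rcases le_total a b with hab | hab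
  · rw [uIoo_of_le hab] at hx
    exact mul_neg_of_pos_of_neg (sub_pos.2 hx.1) (sub_neg.2 hx.2)
  · rw [uIoo_of_ge hab] at hx
    exact mul_neg_of_neg_of_pos (sub_neg.2 hx.2) (sub_pos.2 hx.1)

def trapezoidCubic (t k : ℝ) : ℝ := 16*k^3 - 12*(t+1)*k^2 + 4*(2*t - 1)*k + t + 1

section trapezoidCubic

variable {t : ℝ}

theorem continuous_trapezoidCubic (t : ℝ) : Continuous (trapezoidCubic t) := by
  unfold trapezoidCubic
  fun_prop

theorem hasDerivAt_trapezoidCubic (t k : ℝ) :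
    HasDerivAt (trapezoidCubic t) (48 * (k - 1/2) * (k - t/2) - 4 * (t + 1)) k := by
  have h := ((((hasDerivAt_pow 3 k).const_mul 16).sub ((hasDerivAt_pow 2 k).const_mul
    (12 * (t + 1)))).add ((hasDerivAt_id' k).const_mul (4 * (2 * t - 1)))).add_const (t + 1)
  refine (h.congr_deriv (by push_cast; ring)).congr_of_eventuallyEq (.of_forall fun x => ?_)
  simp only [trapezoidCubic, Pi.add_apply, Pi.sub_apply]
  ring

theorem strictAntiOn_trapezoidCubic (ht : -1 < t) :
    StrictAntiOn (trapezoidCubic t) (uIoo (1/2) (t/2)) := by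
  refine strictAntiOn_of_deriv_neg (convex_Ioo _ _) (continuous_trapezoidCubic t).continuousOn ?_
  intro k hk
  rw [interior_Ioo] at hk
  rw [(hasDerivAt_trapezoidCubic t k).deriv]
  nlinarith [sub_mul_sub_neg_of_mem_uIoo hk]

theorem zero_mem_uIoo_trapezoidCubic (ht1 : t ≠ 1) :
    (0 : ℝ) ∈ uIoo (trapezoidCubic t (1/2)) (trapezoidCubic t (t/2)) := by
  have h_half : trapezoidCubic t (1/2) = 2 * (t - 1) := by unfold trapezoidCubic; ring
  have h_half_t : trapezoidCubic t (t/2) = -((t - 1) * (t^2 + 1)) := by unfold trapezoidCubic; ring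
  rw [h_half, h_half_t]
  rcases ht1.lt_or_gt with ht | ht
  · exact mem_uIoo_of_lt (by linarith) (by nlinarith)
  · exact mem_uIoo_of_gt (by nlinarith) (by linarith)

end trapezoidCubic

theorem cubic_unique_root (t : ℝ) (ht : 0 < t) (ht1 : t ≠ 1)
    (c : ℝ → ℝ)
    (hc : ∀ k, c k = 16*k^3 - 12*(t+1)*k^2 + 4*(2*t - 1)*k + t + 1) :
    ∃! k : ℝ, k ∈ Set.Ioo (min (1/2) (t/2)) (max (1/2) (t/2)) ∧ c k = 0 := by
  obtain rfl : c = trapezoidCubic t := funext hc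
  exact existsUnique_mem_uIoo_of_injOn (continuous_trapezoidCubic t).continuousOn
    (strictAntiOn_trapezoidCubic (by linarith)).injOn (zero_mem_uIoo_trapezoidCubic ht1)
end
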